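/- Let (g_ι)_{ι<α} be a non-empty ordinal-indexed sequence of total canonical term graphs over a signature Σ (all arities finite), and let liminf_{ι→α} g_ι be its limit inferior in the complete semilattice of canonical partial term graphs ordered by ≤⊥r. If liminf_{ι→α} g_ι is a total term graph, then (g_ι)_{ι<α} converges in the metric space of total canonical term graphs with the rigid distance d†, and liminf_{ι→α} g_ι = lim_{ι→α} g_ι. -/

import Mathlib

set_option autoImplicit false

namespace TGR

/-- A signature: a type of symbols, each with a finite arity. -/
structure Signature where
  Sym : Type
  ar : Sym → ℕ

/-- The signature `Σ_⊥`: `Σ` extended by a fresh nullary symbol `⊥` (here `none`). -/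
def Signature.bot (S : Signature) : Signature where
  Sym := Option S.Sym
  ar := fun o => match o with
    | none => 0
    | some f => S.ar f

/-- A rooted graph over a signature `S` with nodes `N`: a labelling, a successor
function respecting arities, and a root node. -/
structure TermGraph (S : Signature) (N : Type) where
  lab : N → S.Sym
  suc : (n : N) → Fin (S.ar (lab n)) → N
  root : N

namespace TermGraph

variable {S : Signature} {N M K : Type}

/-- `g.IsPos π n`: `π` is a position (path of successor indices from the root) of node `n`. -/
inductive IsPos (g : TermGraph S N) : List ℕ → N → Prop
  | root : IsPos g [] g.root
  | step {π : List ℕ} {n : N} (h : IsPos g π n) (i : Fin (S.ar (g.lab n))) :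
      IsPos g (π ++ [(i : ℕ)]) (g.suc n i)

/-- All nodes are reachable from the root. -/
def Reachable (g : TermGraph S N) : Prop :=
  ∀ n : N, ∃ π : List ℕ, g.IsPos π n

/-- The set of positions of `g`. -/
def pos (g : TermGraph S N) : Set (List ℕ) :=
  {π | ∃ n : N, g.IsPos π n}

/-- The set of positions of node `n` in `g`. -/
def nodePos (g : TermGraph S N) (n : N) : Set (List ℕ) :=
  {π | g.IsPos π n}

/-- `π ∼_g π'`: `π` and `π'` are positions of the same node. -/
def Aliases (g : TermGraph S N) (π π' : List ℕ) : Prop :=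
  ∃ n : N, g.IsPos π n ∧ g.IsPos π' n

/-- A position is acyclic if it passes no node twice. -/
def IsAcyclicPos (g : TermGraph S N) (π : List ℕ) : Prop :=
  ∀ (π₁ π₂ : List ℕ) (n : N), π₁ <+: π₂ → π₂ <+: π →
    g.IsPos π₁ n → g.IsPos π₂ n → π₁ = π₂

/-- The set of acyclic positions of node `n` in `g`. -/
def nodePosAcy (g : TermGraph S N) (n : N) : Set (List ℕ) :=
  {π | g.IsPos π n ∧ g.IsAcyclicPos π}

/-- The set of acyclic positions of `g`. -/
def posAcy (g : TermGraph S N) : Set (List ℕ) :=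
  {π | (∃ n : N, g.IsPos π n) ∧ g.IsAcyclicPos π}

/-- The depth of a node: the minimal length of its positions. -/
noncomputable def depth (g : TermGraph S N) (n : N) : ℕ :=
  sInf {k : ℕ | ∃ π : List ℕ, g.IsPos π n ∧ π.length = k}

open Classical in
/-- The (unique) node at a position. -/
noncomputable def nodeAt (g : TermGraph S N) (π : List ℕ) : N :=
  if h : ∃ n : N, g.IsPos π n then h.choose else g.root

/-- The label `g(π)` at a position. -/
noncomputable def labAt (g : TermGraph S N) (π : List ℕ) : S.Sym :=
  g.lab (g.nodeAt π)

/-- `Δ`-homomorphism: root, labelling and successor conditions, the latter two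
suspended on `Δ`-labelled nodes. -/
structure IsDHom (Δ : Set S.Sym) (g : TermGraph S N) (h : TermGraph S M)
    (φ : N → M) : Prop where
  root_eq : φ g.root = h.root
  lab_eq : ∀ n : N, g.lab n ∉ Δ → h.lab (φ n) = g.lab n
  suc_eq : ∀ n : N, g.lab n ∉ Δ → ∀ (i : ℕ) (hi : i < S.ar (g.lab n))
      (hi' : i < S.ar (h.lab (φ n))),
      φ (g.suc n ⟨i, hi⟩) = h.suc (φ n) ⟨i, hi'⟩

/-- Rigidity: `Pa_g(n) = Pa_h(φ n)` for all non-`Δ`-labelled nodes `n`. -/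
def IsRigid (Δ : Set S.Sym) (g : TermGraph S N) (h : TermGraph S M)
    (φ : N → M) : Prop :=
  ∀ n : N, g.lab n ∉ Δ → g.nodePosAcy n = h.nodePosAcy (φ n)

/-- Rigid `Δ`-homomorphism. -/
def IsRigidDHom (Δ : Set S.Sym) (g : TermGraph S N) (h : TermGraph S M)
    (φ : N → M) : Prop :=
  IsDHom Δ g h φ ∧ IsRigid Δ g h φ

/-- Isomorphism of term graphs: a homomorphism with an inverse homomorphism. -/
def Iso (g : TermGraph S N) (h : TermGraph S M) : Prop :=
  ∃ (φ : N → M) (ψ : M → N), IsDHom ∅ g h φ ∧ IsDHom ∅ h g ψ ∧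
    (∀ n : N, ψ (φ n) = n) ∧ (∀ m : M, φ (ψ m) = m)

/-- A partial term graph (over `Σ_⊥`) is total if no node is labelled `⊥`. -/
def Total (g : TermGraph S.bot N) : Prop := ∀ n : N, g.lab n ≠ none

/-- Rigid `⊥`-homomorphism between partial term graphs. -/
def IsRigidBotHom (g : TermGraph S.bot N) (h : TermGraph S.bot M)
    (φ : N → M) : Prop :=
  IsRigidDHom ({none} : Set (Option S.Sym)) g h φ

/-- The `⊥`-depth of a partial term graph: the minimal depth of a `⊥`-labelled
node, `ω` (`⊤`) if there is none. -/
noncomputable def botDepth (g : TermGraph S.bot N) : ℕ∞ :=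
  sInf {d : ℕ∞ | ∃ n : N, g.lab n = none ∧ (g.depth n : ℕ∞) = d}

/-- `m` is an acyclic predecessor of `n`: some acyclic position `π ++ [i]` of `n`
has `π` a position of `m`. -/
def acyPred (g : TermGraph S N) (n : N) : Set N :=
  {m | ∃ (π : List ℕ) (i : ℕ), (π ++ [i]) ∈ g.nodePosAcy n ∧ g.IsPos π m}

/-- Retained nodes of the truncation at depth `d`: the least set of nodes
containing all nodes of depth `< d` and closed under acyclic predecessors. -/
inductive Retained (g : TermGraph S N) (d : ℕ) : N → Prop
  | shallow {n : N} : g.depth n < d → Retained g d n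
  | pred {n m : N} : Retained g d n → m ∈ g.acyPred n → Retained g d m

theorem not_retained_zero {g : TermGraph S N} (n : N) : ¬ g.Retained 0 n := by
  intro h
  induction h with
  | shallow hd => exact Nat.not_lt_zero _ hd
  | pred _ _ ih => exact ih

/-- Fringe nodes of the truncation at depth `d` (a pair `(n, i)` stands for the
fresh node `n^i`); at depth `0` the fringe is just (a copy of) the root. -/
def IsFringe (g : TermGraph S.bot N) (d : ℕ) (p : N × ℕ) : Prop :=
  if d = 0 then p = (g.root, 0)
  else g.Retained d p.1 ∧ ∃ h : p.2 < S.bot.ar (g.lab p.1),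
    (¬ g.Retained d (g.suc p.1 ⟨p.2, h⟩) ∨
      (d - 1 ≤ g.depth p.1 ∧ p.1 ∉ g.acyPred (g.suc p.1 ⟨p.2, h⟩)))

/-- The node set of the rigid truncation: retained nodes plus fringe nodes. -/
def TNode (g : TermGraph S.bot N) (d : ℕ) : Type :=
  {x : N ⊕ (N × ℕ) // Sum.elim (g.Retained d) (g.IsFringe d) x}

def truncLab (g : TermGraph S.bot N) (d : ℕ) (x : TNode g d) : S.bot.Sym :=
  Sum.elim (fun n => g.lab n) (fun _ => none) x.1

open Classical in
noncomputable def truncSuc (g : TermGraph S.bot N) (d : ℕ) :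
    (x : TNode g d) → Fin (S.bot.ar (truncLab g d x)) → TNode g d
  | ⟨Sum.inl n, hn⟩ => fun i =>
      if hf : g.IsFringe d (n, (i : ℕ)) then ⟨Sum.inr (n, (i : ℕ)), hf⟩
      else
        ⟨Sum.inl (g.suc n ⟨(i : ℕ), i.isLt⟩), by
          show g.Retained d (g.suc n ⟨(i : ℕ), i.isLt⟩)
          rcases Nat.eq_zero_or_pos d with hd | hd
          · subst hd
            exact ((not_retained_zero n) hn).elim
          · by_contra hc
            apply hf
            show g.IsFringe d (n, (i : ℕ))
            unfold IsFringe
            rw [if_neg (Nat.pos_iff_ne_zero.mp hd)]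
            exact ⟨hn, i.isLt, Or.inl hc⟩⟩
  | ⟨Sum.inr p, hp⟩ => fun i => absurd i.isLt (Nat.not_lt_zero _)

noncomputable def truncRoot (g : TermGraph S.bot N) (d : ℕ) : TNode g d :=
  if hd : d = 0 then
    ⟨Sum.inr (g.root, 0), by
      subst hd
      show g.IsFringe 0 (g.root, 0)
      simp [IsFringe]⟩
  else
    ⟨Sum.inl g.root, by
      show g.Retained d g.root
      exact Retained.shallow (lt_of_le_of_lt
        (Nat.sInf_le ⟨[], IsPos.root, rfl⟩) (Nat.pos_of_ne_zero hd))⟩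

/-- The rigid truncation `g†d` of a partial term graph at finite depth `d`. -/
noncomputable def trunc (g : TermGraph S.bot N) (d : ℕ) :
    TermGraph S.bot (TNode g d) where
  lab := truncLab g d
  suc := truncSuc g d
  root := truncRoot g d

end TermGraph

/-- A canonical term graph: a term graph whose nodes are sets of positions,
each node being exactly its set of positions, with all nodes reachable. -/
structure CTG (S : Signature) where
  nodes : Set (Set (List ℕ))
  tg : TermGraph S ↥nodes
  reach : tg.Reachable
  canon : ∀ n : ↥nodes, (n : Set (List ℕ)) = tg.nodePos n

namespace CTG

variable {S : Signature}

def pos (g : CTG S) : Set (List ℕ) := g.tg.pos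
def Aliases (g : CTG S) : List ℕ → List ℕ → Prop := g.tg.Aliases
def posAcy (g : CTG S) : Set (List ℕ) := g.tg.posAcy
noncomputable def labAt (g : CTG S) : List ℕ → S.Sym := g.tg.labAt

/-- A canonical partial term graph is total if it has no `⊥`-labelled node. -/
def Total (g : CTG S.bot) : Prop := g.tg.Total

/-- The rigid partial order `g ≤⊥r h`: there is a rigid `⊥`-homomorphism
from `g` to `h`. -/
def LeR (g h : CTG S.bot) : Prop :=
  ∃ φ, TermGraph.IsRigidBotHom g.tg h.tg φ

noncomputable def botDepth (g : CTG S.bot) : ℕ∞ := g.tg.botDepth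

/-- `TruncIso g h d`: the rigid truncations of `g` and `h` at depth `d ≤ ω`
are isomorphic (`g†ω = g`). -/
def TruncIso {N M : Type} (g : TermGraph S.bot N) (h : TermGraph S.bot M)
    (d : ℕ∞) : Prop :=
  (d = ⊤ → TermGraph.Iso g h) ∧
  ∀ k : ℕ, d = (k : ℕ∞) → TermGraph.Iso (g.trunc k) (h.trunc k)

/-- The rigid similarity `sim†(g,h)`: the maximal `d ≤ ω` such that
`g†d ≅ h†d`. -/
noncomputable def simr (g h : CTG S.bot) : ℕ∞ :=
  sSup {d : ℕ∞ | TruncIso g.tg h.tg d}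

open Classical in
/-- The rigid distance `d†(g,h) = 2^{-sim†(g,h)}` (with `2^{-ω} = 0`). -/
noncomputable def rdist (g h : CTG S.bot) : ℝ :=
  if simr g h = ⊤ then 0 else (1 / 2 : ℝ) ^ (simr g h).toNat

def IsUB (A : Set (CTG S.bot)) (u : CTG S.bot) : Prop := ∀ g ∈ A, LeR g u

def IsLubR (A : Set (CTG S.bot)) (u : CTG S.bot) : Prop :=
  IsUB A u ∧ ∀ v, IsUB A v → LeR u v

def IsLB (A : Set (CTG S.bot)) (l : CTG S.bot) : Prop := ∀ g ∈ A, LeR l g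

def IsGlbR (A : Set (CTG S.bot)) (l : CTG S.bot) : Prop :=
  IsLB A l ∧ ∀ m, IsLB A m → LeR m l

/-- A directed set: non-empty and every two elements have an upper bound inside. -/
def DirectedR (A : Set (CTG S.bot)) : Prop :=
  A.Nonempty ∧ ∀ g ∈ A, ∀ h ∈ A, ∃ u ∈ A, LeR g u ∧ LeR h u

/-- `L` is the limit inferior `⨆_{β<α} ⨅_{β≤ι<α} f ι` of the ordinal-indexed
sequence `(f ι)_{ι<α}` in the rigid partial order. -/
def IsLiminfR (α : Ordinal.{0}) (f : Ordinal.{0} → CTG S.bot) (L : CTG S.bot) : Prop :=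
  ∃ inf : Ordinal.{0} → CTG S.bot,
    (∀ β < α, IsGlbR {g | ∃ ι, β ≤ ι ∧ ι < α ∧ g = f ι} (inf β)) ∧
    IsLubR {g | ∃ β < α, g = inf β} L

/-- Cauchy condition for an ordinal-indexed sequence w.r.t. the rigid distance. -/
def OrdCauchy (α : Ordinal.{0}) (f : Ordinal.{0} → CTG S.bot) : Prop :=
  ∀ ε : ℝ, 0 < ε → ∃ β < α, ∀ ι ι' : Ordinal.{0},
    β < ι → ι < ι' → ι' < α → rdist (f ι) (f ι') < ε

/-- Convergence of an ordinal-indexed sequence to `g` w.r.t. the rigid distance. -/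
def OrdTendsto (α : Ordinal.{0}) (f : Ordinal.{0} → CTG S.bot) (g : CTG S.bot) : Prop :=
  ∀ ε : ℝ, 0 < ε → ∃ β < α, ∀ ι : Ordinal.{0}, β < ι → ι < α → rdist (f ι) g < ε

/-- `u` is the unravelling of `g`: the term tree with the same positions and
labels as `g` and trivial aliasing. -/
def IsUnravelling (g u : CTG S) : Prop :=
  u.pos = g.pos ∧ (∀ π ∈ g.pos, u.labAt π = g.labAt π) ∧
  (∀ π π' : List ℕ, u.Aliases π π' ↔ (π ∈ g.pos ∧ π = π'))

end CTG

/-- A labelled quotient tree over a signature `S`. -/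
structure LQT (S : Signature) where
  P : Set (List ℕ)
  nonempty : P.Nonempty
  l : List ℕ → S.Sym
  rel : List ℕ → List ℕ → Prop
  rel_refl : ∀ π ∈ P, rel π π
  rel_symm : ∀ π π' : List ℕ, rel π π' → rel π' π
  rel_trans : ∀ π π' π'' : List ℕ, rel π π' → rel π' π'' → rel π π''
  rel_mem : ∀ π π' : List ℕ, rel π π' → π ∈ P ∧ π' ∈ P
  reach_mem : ∀ (π : List ℕ) (i : ℕ), π ++ [i] ∈ P → π ∈ P
  reach_ar : ∀ (π : List ℕ) (i : ℕ), π ++ [i] ∈ P → i < S.ar (l π)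
  congr_lab : ∀ π π' : List ℕ, rel π π' → l π = l π'
  congr_suc : ∀ (π π' : List ℕ) (i : ℕ), rel π π' → i < S.ar (l π) →
    rel (π ++ [i]) (π' ++ [i])

end TGR

/-!
The liminf `L` is the least upper bound of the `≤⊥r`-chain `c β = ⨅_{β ≤ ι < α} f ι`. The
positions of the chain, identified when they alias at some stage, form a canonical term graph
above every `c β`, so `L` lies below it. Totality of `L` therefore forces every position of the
chain to carry a symbol from some stage on, and since arities are finite, all positions of length
at most `k` do so from a common stage `β`. Then `c β` has no `⊥`-node of depth `< k`, and a rigid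
`⊥`-homomorphism out of such a graph induces an isomorphism of the rigid truncations at depth `k`.
Applied to `c β ≤⊥r f ι` (for `ι ≥ β`) and to `c β ≤⊥r L`, this gives `f ι†k ≅ L†k`, that is,
`d†(f ι, L) ≤ 2^{-k}`.
-/

namespace TGR

namespace TermGraph

variable {S : Signature} {N M K : Type}

section Positions

variable {g : TermGraph S N}

theorem IsPos.eq_root_of_nil {n : N} (h : g.IsPos [] n) : n = g.root := by
  generalize hπ : ([] : List ℕ) = π at h
  cases h with
  | root => rfl
  | step => simp at hπ

theorem IsPos.exists_of_append_singleton {π : List ℕ} {i : ℕ} {n : N}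
    (h : g.IsPos (π ++ [i]) n) :
    ∃ (m : N) (_ : g.IsPos π m) (hi : i < S.ar (g.lab m)), n = g.suc m ⟨i, hi⟩ := by
  generalize hρ : π ++ [i] = ρ at h
  cases h with
  | root => simp at hρ
  | step hm j =>
    obtain ⟨rfl, hj⟩ := List.append_inj' hρ rfl
    obtain rfl : i = j := by simpa using hj
    exact ⟨_, hm, j.isLt, rfl⟩

theorem IsPos.unique {π : List ℕ} {n n' : N} (h : g.IsPos π n) (h' : g.IsPos π n') :
    n = n' := by
  induction h generalizing n' with
  | root => exact h'.eq_root_of_nil.symm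
  | step _ i ih =>
    obtain ⟨m', hm', hi', rfl⟩ := h'.exists_of_append_singleton
    cases ih hm'
    rfl

theorem IsPos.of_prefix {π ρ : List ℕ} {n : N} (h : g.IsPos π n) (hp : ρ <+: π) :
    ∃ m, g.IsPos ρ m := by
  obtain ⟨σ, rfl⟩ := hp
  induction σ using List.reverseRecOn generalizing n with
  | nil => exact ⟨n, by simpa using h⟩
  | append_singleton σ i ih =>
    rw [← List.append_assoc] at h
    obtain ⟨m, hm, -, -⟩ := h.exists_of_append_singleton
    exact ih hm

theorem IsPos.lt_ar {π : List ℕ} {i : ℕ} {m n : N} (h : g.IsPos (π ++ [i]) m)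
    (hn : g.IsPos π n) : i < S.ar (g.lab n) := by
  obtain ⟨n', hn', hi, -⟩ := h.exists_of_append_singleton
  rwa [hn.unique hn']

theorem IsPos.append_of_isPos {π π' σ : List ℕ} {m x : N} (hm : g.IsPos π m)
    (hm' : g.IsPos π' m) (hx : g.IsPos (π ++ σ) x) : g.IsPos (π' ++ σ) x := by
  induction σ using List.reverseRecOn generalizing x with
  | nil =>
    rw [List.append_nil] at hx ⊢
    rwa [hx.unique hm]
  | append_singleton σ i ih =>
    rw [← List.append_assoc] at hx ⊢
    obtain ⟨y, hy, hi, rfl⟩ := hx.exists_of_append_singleton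
    exact (ih hy).step ⟨i, hi⟩

theorem depth_le {π : List ℕ} {n : N} (h : g.IsPos π n) : g.depth n ≤ π.length :=
  Nat.sInf_le ⟨π, h, rfl⟩

/-- A shortest position cannot revisit a node, since cutting out the cycle shortens it. -/
theorem exists_isAcyclicPos_length_eq_depth {n : N} (h : ∃ π, g.IsPos π n) :
    ∃ π, g.IsPos π n ∧ g.IsAcyclicPos π ∧ π.length = g.depth n := by
  obtain ⟨π₀, hπ₀⟩ := h
  obtain ⟨π, hπ, hlen⟩ := Nat.sInf_mem (s := {k | ∃ π, g.IsPos π n ∧ π.length = k})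
    ⟨π₀.length, π₀, hπ₀, rfl⟩
  refine ⟨π, hπ, fun π₁ π₂ m h12 h2π hp1 hp2 => ?_, hlen⟩
  by_contra hne
  have hlt : π₁.length < π₂.length :=
    lt_of_le_of_ne h12.length_le fun e => hne (h12.eq_of_length e)
  obtain ⟨σ, rfl⟩ := h2π
  have hshort := depth_le (hp2.append_of_isPos hp1 hπ)
  simp only [List.length_append] at hlen hshort
  change _ = g.depth n at hlen
  omega

theorem depth_suc_le {n : N} (h : ∃ π, g.IsPos π n) (i : Fin (S.ar (g.lab n))) :
    g.depth (g.suc n i) ≤ g.depth n + 1 := by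
  obtain ⟨π, hπ, -, hlen⟩ := exists_isAcyclicPos_length_eq_depth h
  simpa [hlen] using depth_le (hπ.step i)

theorem IsAcyclicPos.of_prefix {π ρ : List ℕ} (h : g.IsAcyclicPos π) (hp : ρ <+: π) :
    g.IsAcyclicPos ρ :=
  fun π₁ π₂ m h12 h2ρ => h π₁ π₂ m h12 (h2ρ.trans hp)

theorem prefix_append_singleton {ρ π : List ℕ} {i : ℕ} (hp : ρ <+: π ++ [i]) :
    ρ = π ++ [i] ∨ ρ <+: π := by
  obtain ⟨t, ht⟩ := hp
  induction t using List.reverseRecOn with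
  | nil => left; simpa using ht
  | append_singleton t j _ =>
    rw [← List.append_assoc] at ht
    exact Or.inr ⟨t, (List.append_inj' ht rfl).1⟩

theorem IsAcyclicPos.append_singleton {π : List ℕ} {i j : ℕ} {x : N}
    (hacy : g.IsAcyclicPos (π ++ [j])) (hj : g.IsPos (π ++ [j]) x)
    (hi : g.IsPos (π ++ [i]) x) : g.IsAcyclicPos (π ++ [i]) := by
  intro π₁ π₂ m h12 h2 hp1 hp2
  rcases prefix_append_singleton h2 with rfl | h2π
  · rcases prefix_append_singleton h12 with rfl | h1π
    · rfl
    · cases hp2.unique hi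
      have := hacy π₁ (π ++ [j]) _ (h1π.trans (List.prefix_append _ _)) (List.prefix_refl _) hp1 hj
      simpa [this] using h1π.length_le
  · exact hacy π₁ π₂ m h12 (h2π.trans (List.prefix_append _ _)) hp1 hp2

theorem IsPos.nodeAt_eq {π : List ℕ} {n : N} (h : g.IsPos π n) : g.nodeAt π = n := by
  have hex : ∃ n, g.IsPos π n := ⟨n, h⟩
  rw [nodeAt, dif_pos hex]
  exact hex.choose_spec.unique h

theorem finite_pos_length_le (g : TermGraph S N) (k : ℕ) :
    {π | π ∈ g.pos ∧ π.length ≤ k}.Finite := by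
  induction k with
  | zero =>
    refine (Set.finite_singleton []).subset fun π ⟨_, hlen⟩ => ?_
    simpa using hlen
  | succ k ih =>
    refine (ih.union (ih.biUnion fun ρ _ =>
      (Set.finite_Iio (S.ar (g.labAt ρ))).image (ρ ++ [·]))).subset ?_
    rintro π ⟨⟨n, hn⟩, hlen⟩
    by_cases hk : π.length ≤ k
    · exact Or.inl ⟨⟨n, hn⟩, hk⟩
    obtain ⟨ρ, i, rfl⟩ := (List.eq_nil_or_concat' π).resolve_left (by rintro rfl; simp at hk)
    obtain ⟨m, hm⟩ := hn.of_prefix (List.prefix_append ρ [i])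
    simp only [List.length_append, List.length_singleton] at hlen
    refine Or.inr (Set.mem_biUnion ⟨⟨m, hm⟩, by omega⟩ ⟨i, ?_, rfl⟩)
    rw [Set.mem_Iio, labAt, hm.nodeAt_eq]
    exact hn.lt_ar hm

end Positions

theorem depth_eq_of_nodePosAcy_eq {g : TermGraph S N} {h : TermGraph S M} {n : N} {m : M}
    (hn : ∃ π, g.IsPos π n) (he : g.nodePosAcy n = h.nodePosAcy m) :
    g.depth n = h.depth m := by
  obtain ⟨π, hπ, hacy, hlen⟩ := exists_isAcyclicPos_length_eq_depth hn
  have hπ' : π ∈ h.nodePosAcy m := he ▸ ⟨hπ, hacy⟩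
  obtain ⟨π', hπ'', hacy', hlen'⟩ := exists_isAcyclicPos_length_eq_depth ⟨π, hπ'.1⟩
  have hπ''' : π' ∈ g.nodePosAcy n := he ▸ ⟨hπ'', hacy'⟩
  have := depth_le hπ'''.1
  have := depth_le hπ'.1
  omega

theorem lab_ne_none_of_isPos_append {g : TermGraph S.bot N} {π : List ℕ} {i : ℕ} {m n : N}
    (h : g.IsPos (π ++ [i]) m) (hn : g.IsPos π n) : g.lab n ≠ none := by
  intro e
  have := h.lt_ar hn
  simp [e, Signature.bot] at this

section Homomorphisms

theorem IsDHom.lab_eq_of_ne_none {g : TermGraph S.bot N} {h : TermGraph S.bot M} {φ : N → M}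
    (hφ : IsDHom ({none} : Set S.bot.Sym) g h φ) {n : N} (hn : g.lab n ≠ none) :
    h.lab (φ n) = g.lab n :=
  hφ.lab_eq n hn

theorem IsDHom.isPos {g : TermGraph S.bot N} {h : TermGraph S.bot M} {φ : N → M}
    (hφ : IsDHom ({none} : Set S.bot.Sym) g h φ) {π : List ℕ} {n : N} (hπ : g.IsPos π n) :
    h.IsPos π (φ n) := by
  induction hπ with
  | root => rw [hφ.root_eq]; exact .root
  | @step π m hm i ih =>
    have hm' : g.lab m ≠ none := lab_ne_none_of_isPos_append (hm.step i) hm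
    have hi : (i : ℕ) < S.bot.ar (h.lab (φ m)) := by
      rw [hφ.lab_eq_of_ne_none hm']; exact i.isLt
    rw [hφ.suc_eq m hm' i i.isLt hi]
    exact ih.step ⟨i, hi⟩

theorem IsDHom.aliases {g : TermGraph S.bot N} {h : TermGraph S.bot M} {φ : N → M}
    (hφ : IsDHom ({none} : Set S.bot.Sym) g h φ) {π π' : List ℕ} (ha : g.Aliases π π') :
    h.Aliases π π' :=
  let ⟨n, hn, hn'⟩ := ha
  ⟨φ n, hφ.isPos hn, hφ.isPos hn'⟩

theorem IsDHom.comp {g : TermGraph S N} {h : TermGraph S M} {k : TermGraph S K}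
    {φ : N → M} {ψ : M → K} (hφ : IsDHom ∅ g h φ) (hψ : IsDHom ∅ h k ψ) :
    IsDHom ∅ g k (ψ ∘ φ) where
  root_eq := by simp [hφ.root_eq, hψ.root_eq]
  lab_eq n _ := by simp [hψ.lab_eq (φ n) (Set.notMem_empty _), hφ.lab_eq n (Set.notMem_empty _)]
  suc_eq n _ i hi hi' := by
    have hi₁ : i < S.ar (h.lab (φ n)) := by rwa [hφ.lab_eq n (Set.notMem_empty _)]
    simp [hφ.suc_eq n (Set.notMem_empty _) i hi hi₁, hψ.suc_eq (φ n) (Set.notMem_empty _) i hi₁ hi']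

theorem Iso.of_leftInverse_of_rightInverse {g : TermGraph S N} {h : TermGraph S M}
    {φ : N → M} {ψ : M → N} (hφ : IsDHom ∅ g h φ) (hl : Function.LeftInverse ψ φ)
    (hr : Function.RightInverse ψ φ) : Iso g h := by
  refine ⟨φ, ψ, hφ, ⟨?_, fun m _ => ?_, fun m _ i hi hi' => ?_⟩, hl, hr⟩
  · rw [← hφ.root_eq, hl]
  · have := hφ.lab_eq (ψ m) (Set.notMem_empty _)
    rw [hr m] at this
    exact this.symm
  · have hi₁ : i < S.ar (h.lab (φ (ψ m))) := by rwa [hr m]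
    apply hl.injective
    rw [hr, hφ.suc_eq (ψ m) (Set.notMem_empty _) i hi' hi₁]
    revert hi₁
    rw [hr m]
    intro _
    rfl

theorem Iso.symm {g : TermGraph S N} {h : TermGraph S M} (e : Iso g h) : Iso h g :=
  let ⟨φ, ψ, hφ, hψ, hl, hr⟩ := e
  ⟨ψ, φ, hψ, hφ, hr, hl⟩

theorem Iso.trans {g : TermGraph S N} {h : TermGraph S M} {k : TermGraph S K}
    (e₁ : Iso g h) (e₂ : Iso h k) : Iso g k :=
  let ⟨φ₁, ψ₁, hφ₁, hψ₁, hl₁, hr₁⟩ := e₁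
  let ⟨φ₂, ψ₂, hφ₂, hψ₂, hl₂, hr₂⟩ := e₂
  ⟨φ₂ ∘ φ₁, ψ₁ ∘ ψ₂, hφ₁.comp hφ₂, hψ₂.comp hψ₁, fun n => by simp [hl₁ n, hl₂ (φ₁ n)],
    fun m => by simp [hr₂ m, hr₁ (ψ₂ m)]⟩

theorem isDHom_of_isPos {Δ : Set S.Sym} {g : TermGraph S N} {h : TermGraph S M} {φ : N → M}
    (hgr : g.Reachable) (hpos : ∀ π n, g.IsPos π n → h.IsPos π (φ n))
    (hlab : ∀ n, g.lab n ∉ Δ → h.lab (φ n) = g.lab n) : IsDHom Δ g h φ where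
  root_eq := (hpos [] g.root .root).eq_root_of_nil
  lab_eq := hlab
  suc_eq n hn i hi hi' := by
    obtain ⟨π, hπ⟩ := hgr n
    exact (hpos _ _ (hπ.step ⟨i, hi⟩)).unique ((hpos π n hπ).step ⟨i, hi'⟩)

end Homomorphisms

section Truncation

variable {g : TermGraph S.bot N} {h : TermGraph S.bot M} {φ : N → M} {d : ℕ}

theorem le_botDepth_iff :
    (d : ℕ∞) ≤ g.botDepth ↔ ∀ w, g.lab w = none → d ≤ g.depth w := by
  simp [botDepth, le_sInf_iff]

theorem lab_ne_none_of_mem_acyPred {n m : N} (hm : m ∈ g.acyPred n) : g.lab m ≠ none :=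
  let ⟨_, _, hmem, hπ⟩ := hm
  lab_ne_none_of_isPos_append hmem.1 hπ

theorem Retained.lab_ne_none (hbot : d ≤ g.botDepth) {n : N}
    (hn : g.Retained d n) : g.lab n ≠ none := by
  induction hn with
  | shallow hdep => exact fun e => absurd (le_botDepth_iff.1 hbot _ e) (not_le.2 hdep)
  | pred _ hm _ => exact lab_ne_none_of_mem_acyPred hm

theorem isFringe_iff_of_ne_zero (hd : d ≠ 0) {p : N × ℕ} :
    g.IsFringe d p ↔ g.Retained d p.1 ∧ ∃ hi : p.2 < S.bot.ar (g.lab p.1),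
      ¬ g.Retained d (g.suc p.1 ⟨p.2, hi⟩) ∨
        (d - 1 ≤ g.depth p.1 ∧ p.1 ∉ g.acyPred (g.suc p.1 ⟨p.2, hi⟩)) := by
  rw [IsFringe, if_neg hd]

theorem IsRigidBotHom.nodePosAcy_eq (hφ : IsRigidBotHom g h φ) {n : N} (hn : g.lab n ≠ none) :
    g.nodePosAcy n = h.nodePosAcy (φ n) :=
  hφ.2 n hn

theorem IsRigidBotHom.depth_eq (hφ : IsRigidBotHom g h φ) (hgr : g.Reachable) {n : N}
    (hn : g.lab n ≠ none) : h.depth (φ n) = g.depth n :=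
  (depth_eq_of_nodePosAcy_eq (hgr n) (hφ.nodePosAcy_eq hn)).symm

theorem IsRigidBotHom.isPos_of_isAcyclicPos (hφ : IsRigidBotHom g h φ) {n : N}
    (hn : g.lab n ≠ none) {π : List ℕ} (hπ : h.IsPos π (φ n)) (hacy : h.IsAcyclicPos π) :
    g.IsPos π n :=
  (((hφ.nodePosAcy_eq hn).symm ▸ ⟨hπ, hacy⟩ : π ∈ g.nodePosAcy n)).1

theorem IsRigidBotHom.injOn (hφ : IsRigidBotHom g h φ) (hgr : g.Reachable) :
    Set.InjOn φ {n | g.lab n ≠ none} := by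
  intro n hn n' hn' he
  obtain ⟨π, hπ, hacy, -⟩ := exists_isAcyclicPos_length_eq_depth (hgr n)
  have hπ' : π ∈ h.nodePosAcy (φ n') := he ▸ hφ.nodePosAcy_eq hn ▸ ⟨hπ, hacy⟩
  exact hπ.unique (hφ.isPos_of_isAcyclicPos hn' hπ'.1 hπ'.2)

theorem IsRigidBotHom.mem_acyPred_iff (hφ : IsRigidBotHom g h φ) {m w : N}
    (hm : g.lab m ≠ none) (hw : g.lab w ≠ none) :
    m ∈ g.acyPred w ↔ φ m ∈ h.acyPred (φ w) := by
  simp only [acyPred, Set.mem_ofPred_eq, hφ.nodePosAcy_eq hw]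
  exact exists₂_congr fun π i => and_congr_right fun hmem =>
    ⟨hφ.1.isPos, fun hπ => hφ.isPos_of_isAcyclicPos hm hπ
      (hmem.2.of_prefix (List.prefix_append _ _))⟩

theorem IsRigidBotHom.retained (hφ : IsRigidBotHom g h φ) (hgr : g.Reachable)
    (hbot : d ≤ g.botDepth) {n : N} (hn : g.Retained d n) :
    h.Retained d (φ n) := by
  induction hn with
  | shallow hdep =>
    exact .shallow (by rwa [hφ.depth_eq hgr ((Retained.shallow hdep).lab_ne_none hbot)])
  | pred hn hm ih =>
    exact ih.pred ((hφ.mem_acyPred_iff (lab_ne_none_of_mem_acyPred hm)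
      (hn.lab_ne_none hbot)).1 hm)

theorem IsRigidBotHom.exists_isPos_of_length_lt (hφ : IsRigidBotHom g h φ)
    (hbot : d ≤ g.botDepth) {π : List ℕ} (hlen : π.length < d) {x : M}
    (hx : h.IsPos π x) : ∃ n, g.IsPos π n ∧ φ n = x := by
  induction π using List.reverseRecOn generalizing x with
  | nil => exact ⟨g.root, .root, by rw [hx.eq_root_of_nil, hφ.1.root_eq]⟩
  | append_singleton π i ih =>
    obtain ⟨y, hy, hi, rfl⟩ := hx.exists_of_append_singleton
    simp only [List.length_append, List.length_singleton] at hlen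
    obtain ⟨n, hn, rfl⟩ := ih (by omega) hy
    have hnl : g.lab n ≠ none := fun e => by
      have := le_botDepth_iff.1 hbot n e
      have := depth_le hn
      omega
    have hi' : i < S.bot.ar (g.lab n) := by rwa [← hφ.1.lab_eq_of_ne_none hnl]
    exact ⟨_, hn.step ⟨i, hi'⟩, hφ.1.suc_eq n hnl i hi' hi⟩

theorem IsRigidBotHom.exists_retained (hφ : IsRigidBotHom g h φ) (hhr : h.Reachable)
    (hbot : d ≤ g.botDepth) {m : M} (hm : h.Retained d m) :
    ∃ n, g.Retained d n ∧ φ n = m := by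
  induction hm with
  | @shallow m hdep =>
    obtain ⟨π, hπ, -, hlen⟩ := exists_isAcyclicPos_length_eq_depth (hhr m)
    obtain ⟨n, hn, rfl⟩ := hφ.exists_isPos_of_length_lt hbot (hlen ▸ hdep) hπ
    exact ⟨n, .shallow ((depth_le hn).trans_lt (hlen ▸ hdep)), rfl⟩
  | pred _ hm ih =>
    obtain ⟨n, hn, rfl⟩ := ih
    obtain ⟨π, i, hmem, hπ⟩ := hm
    rw [← hφ.nodePosAcy_eq (hn.lab_ne_none hbot)] at hmem
    obtain ⟨y, hy⟩ := hmem.1.of_prefix (List.prefix_append π [i])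
    exact ⟨y, hn.pred ⟨π, i, hmem, hy⟩, (hφ.1.isPos hy).unique hπ⟩

theorem IsRigidBotHom.bijOn_retained (hφ : IsRigidBotHom g h φ) (hgr : g.Reachable)
    (hhr : h.Reachable) (hbot : d ≤ g.botDepth) :
    Set.BijOn φ {n | g.Retained d n} {m | h.Retained d m} :=
  ⟨fun _ hn => hφ.retained hgr hbot hn,
    (hφ.injOn hgr).mono fun _ hn => Retained.lab_ne_none hbot hn,
    fun _ hm => hφ.exists_retained hhr hbot hm⟩

theorem IsRigidBotHom.retained_iff (hφ : IsRigidBotHom g h φ) (hgr : g.Reachable)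
    (hhr : h.Reachable) (hbot : d ≤ g.botDepth) {n : N}
    (hn : g.lab n ≠ none) : h.Retained d (φ n) ↔ g.Retained d n := by
  refine ⟨fun hr => ?_, hφ.retained hgr hbot⟩
  obtain ⟨n', hn', he⟩ := hφ.exists_retained hhr hbot hr
  rwa [← hφ.injOn hgr (hn'.lab_ne_none hbot) hn he]

/-- If the image of the `⊥`-target is retained, the edge cannot be acyclic in `h`: rigidity would
carry the acyclic position back to `g`, where it ends in a retained, hence non-`⊥`, node. -/
theorem IsRigidBotHom.fringe_of_suc_eq_bot (hφ : IsRigidBotHom g h φ) (hgr : g.Reachable)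
    (hhr : h.Reachable) (hbot : d ≤ g.botDepth) {n : N}
    (hn : g.Retained d n) {i : ℕ} (hi : i < S.bot.ar (g.lab n))
    (hi' : i < S.bot.ar (h.lab (φ n))) (hw : g.lab (g.suc n ⟨i, hi⟩) = none) :
    ¬ h.Retained d (h.suc (φ n) ⟨i, hi'⟩) ∨
      (d - 1 ≤ h.depth (φ n) ∧ φ n ∉ h.acyPred (h.suc (φ n) ⟨i, hi'⟩)) := by
  have hnl := hn.lab_ne_none hbot
  rw [← hφ.1.suc_eq n hnl i hi hi']
  set w := g.suc n ⟨i, hi⟩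
  by_cases hr : h.Retained d (φ w)
  swap
  · exact Or.inl hr
  refine Or.inr ⟨?_, ?_⟩
  · have := le_botDepth_iff.1 hbot w hw
    have : g.depth w ≤ g.depth n + 1 := depth_suc_le (hgr n) ⟨i, hi⟩
    rw [hφ.depth_eq hgr hnl]
    omega
  rintro ⟨π, j, hmem, hπ⟩
  obtain ⟨u, hu, hφu⟩ := hφ.exists_retained hhr hbot hr
  have hπg : g.IsPos π n :=
    hφ.isPos_of_isAcyclicPos hnl hπ (hmem.2.of_prefix (List.prefix_append _ _))
  have hπi : h.IsPos (π ++ [i]) (φ w) := by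
    rw [hφ.1.suc_eq n hnl i hi hi']
    exact hπ.step ⟨i, hi'⟩
  have hu_pos : π ++ [i] ∈ g.nodePosAcy u := by
    rw [hφ.nodePosAcy_eq (hu.lab_ne_none hbot), hφu]
    exact ⟨hπi, hmem.2.append_singleton hmem.1 hπi⟩
  exact hu.lab_ne_none hbot (hu_pos.1.unique (hπg.step ⟨i, hi⟩) ▸ hw)

theorem IsRigidBotHom.isFringe_iff (hφ : IsRigidBotHom g h φ) (hgr : g.Reachable)
    (hhr : h.Reachable) (hd : d ≠ 0) (hbot : d ≤ g.botDepth) {n : N}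
    (hn : g.Retained d n) (i : ℕ) : g.IsFringe d (n, i) ↔ h.IsFringe d (φ n, i) := by
  have hnl := hn.lab_ne_none hbot
  have hlab := hφ.1.lab_eq_of_ne_none hnl
  simp only [isFringe_iff_of_ne_zero hd, hn, hφ.retained hgr hbot hn, true_and]
  by_cases hi : i < S.bot.ar (g.lab n)
  swap
  · have hi' : ¬ i < S.bot.ar (h.lab (φ n)) := by rwa [hlab]
    simp [hi, hi']
  have hi' : i < S.bot.ar (h.lab (φ n)) := by rwa [hlab]
  rw [exists_prop_of_true hi, exists_prop_of_true hi', ← hφ.1.suc_eq n hnl i hi hi']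
  by_cases hw : g.lab (g.suc n ⟨i, hi⟩) = none
  · refine iff_of_true (Or.inl fun hr => hr.lab_ne_none hbot hw) ?_
    rw [hφ.1.suc_eq n hnl i hi hi']
    exact hφ.fringe_of_suc_eq_bot hgr hhr hbot hn hi hi' hw
  · rw [hφ.retained_iff hgr hhr hbot hw, hφ.depth_eq hgr hnl, hφ.mem_acyPred_iff hnl hw]

theorem IsFringe.retained (hd : d ≠ 0) {p : N × ℕ} (hp : g.IsFringe d p) : g.Retained d p.1 :=
  ((isFringe_iff_of_ne_zero hd).1 hp).1

def truncMap (φ : N → M) : N ⊕ (N × ℕ) → M ⊕ (M × ℕ) :=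
  Sum.map φ (Prod.map φ id)

theorem IsRigidBotHom.truncMap_mem (hφ : IsRigidBotHom g h φ) (hgr : g.Reachable)
    (hhr : h.Reachable) (hd : d ≠ 0) (hbot : d ≤ g.botDepth)
    (x : TNode g d) : Sum.elim (h.Retained d) (h.IsFringe d) (truncMap φ x.1) := by
  rcases x with ⟨n | p, hx⟩
  · exact hφ.retained hgr hbot hx
  · exact (hφ.isFringe_iff hgr hhr hd hbot (IsFringe.retained hd hx) p.2).1 hx

theorem IsRigidBotHom.isDHom_trunc (hφ : IsRigidBotHom g h φ) (hgr : g.Reachable)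
    (hhr : h.Reachable) (hd : d ≠ 0) (hbot : d ≤ g.botDepth) :
    IsDHom ∅ (g.trunc d) (h.trunc d)
      (fun x => ⟨truncMap φ x.1, hφ.truncMap_mem hgr hhr hd hbot x⟩) where
  root_eq := by
    apply Subtype.ext
    simp only [trunc, truncRoot, hd, ↓reduceDIte, truncMap, Sum.map_inl, hφ.1.root_eq]
  lab_eq := by
    rintro ⟨n | p, hx⟩ -
    · exact hφ.1.lab_eq_of_ne_none (Retained.lab_ne_none hbot hx)
    · rfl
  suc_eq := by
    rintro ⟨n | p, hx⟩ - i hi hi'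
    · apply Subtype.ext
      have hfr := hφ.isFringe_iff hgr hhr hd hbot hx i
      by_cases hf : g.IsFringe d (n, i)
      · simp [trunc, truncSuc, hf, hfr.1 hf, truncMap]
      · have hf' : ¬ h.IsFringe d (φ n, i) := mt hfr.2 hf
        simp only [trunc, truncSuc, hf, hf', ↓reduceDIte, truncMap, Sum.map_inl]
        exact congrArg Sum.inl (hφ.1.suc_eq n (Retained.lab_ne_none hbot hx) i hi hi')
    · exact absurd hi (Nat.not_lt_zero i)

theorem IsRigidBotHom.trunc_iso (hφ : IsRigidBotHom g h φ) (hgr : g.Reachable)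
    (hhr : h.Reachable) (hd : d ≠ 0) (hbot : d ≤ g.botDepth) :
    Iso (g.trunc d) (h.trunc d) := by
  have : Nonempty N := ⟨g.root⟩
  have hbij := hφ.bijOn_retained hgr hhr hbot
  set ψ := Function.invFunOn φ {n | g.Retained d n}
  have hψ : ∀ m, h.Retained d m → g.Retained d (ψ m) := hbij.surjOn.mapsTo_invFunOn
  have hψφ : ∀ n, g.Retained d n → ψ (φ n) = n := hbij.injOn.leftInvOn_invFunOn
  have hφψ : ∀ m, h.Retained d m → φ (ψ m) = m := hbij.surjOn.rightInvOn_invFunOn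
  have hψ_mem (y : TNode h d) : Sum.elim (g.Retained d) (g.IsFringe d) (truncMap ψ y.1) := by
    rcases y with ⟨m | p, hy⟩
    · exact hψ m hy
    · have hp := hψ p.1 (IsFringe.retained hd hy)
      refine (hφ.isFringe_iff hgr hhr hd hbot hp p.2).2 ?_
      rwa [hφψ p.1 (IsFringe.retained hd hy)]
  refine Iso.of_leftInverse_of_rightInverse (hφ.isDHom_trunc hgr hhr hd hbot)
    (ψ := fun y => ⟨truncMap ψ y.1, hψ_mem y⟩) ?_ ?_
  · rintro ⟨n | p, hx⟩ <;> apply Subtype.ext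
    · simp [truncMap, hψφ n hx]
    · simp [truncMap, Prod.map, hψφ p.1 (IsFringe.retained hd hx)]
  · rintro ⟨m | p, hy⟩ <;> apply Subtype.ext
    · simp [truncMap, hφψ m hy]
    · simp [truncMap, Prod.map, hφψ p.1 (IsFringe.retained hd hy)]

end Truncation

end TermGraph

namespace CTG

variable {S : Signature}

theorem rdist_le_of_iso_trunc {g h : CTG S.bot} {k : ℕ}
    (e : TermGraph.Iso (g.tg.trunc k) (h.tg.trunc k)) : rdist g h ≤ (1 / 2) ^ k := by
  have hk : (k : ℕ∞) ≤ simr g h :=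
    le_sSup ⟨fun hk => absurd hk (ENat.natCast_ne_top k), fun _ hk' => Nat.cast_injective hk' ▸ e⟩
  unfold rdist
  split_ifs with htop
  · positivity
  · refine pow_le_pow_of_le_one (by norm_num) (by norm_num) ?_
    simpa using ENat.toNat_le_toNat hk htop

theorem exists_stage_of_finite {X : Type*} {α : Ordinal.{0}} (hα : α ≠ 0) {Q : Set X}
    (hQ : Q.Finite) {P : X → Ordinal.{0} → Prop} (hP : ∀ x ∈ Q, ∃ β < α, P x β) :
    ∃ β₀ < α, ∀ x ∈ Q, ∃ β ≤ β₀, P x β := by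
  choose! b hb hPb using hP
  rcases Q.eq_empty_or_nonempty with rfl | hne
  · exact ⟨0, pos_iff_ne_zero.2 hα, by simp⟩
  obtain ⟨x, hx, hmax⟩ := Set.exists_max_image Q b hQ hne
  exact ⟨b x, hb x hx, fun y hy => ⟨b y, hmax y hy, hPb y hy⟩⟩

section ChainSupDefs

variable (α : Ordinal.{0}) (c : Ordinal.{0} → CTG S.bot)

def MonotoneBelow : Prop :=
  ∀ β γ, β ≤ γ → γ < α → (c β).LeR (c γ)

def ChainPos (π : List ℕ) : Prop :=
  ∃ β < α, ∃ n, (c β).tg.IsPos π n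

def ChainAliases (π π' : List ℕ) : Prop :=
  ∃ β < α, (c β).tg.Aliases π π'

def ChainLabel (π : List ℕ) (s : S.Sym) : Prop :=
  ∃ β < α, ∃ n, (c β).tg.IsPos π n ∧ (c β).tg.lab n = some s

def chainClass (π : List ℕ) : Set (List ℕ) :=
  {π' | ChainAliases α c π π'}

def chainNodes : Set (Set (List ℕ)) :=
  {C | ∃ π, ChainPos α c π ∧ C = chainClass α c π}

open Classical in
noncomputable def chainLab (C : Set (List ℕ)) : Option S.Sym :=
  if h : ∃ s, ∃ π ∈ C, ChainLabel α c π s then some h.choose else none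

def chainSuc (C : Set (List ℕ)) (i : ℕ) : Set (List ℕ) :=
  {π' | ∃ π ∈ C, ChainAliases α c (π ++ [i]) π'}

end ChainSupDefs

theorem monotoneBelow_of_isGlbR {α : Ordinal.{0}} {f c : Ordinal.{0} → CTG S.bot}
    (hc : ∀ β < α, IsGlbR {g | ∃ ι, β ≤ ι ∧ ι < α ∧ g = f ι} (c β)) : MonotoneBelow α c :=
  fun β γ hβγ hγ => (hc γ hγ).2 (c β) fun _ ⟨ι, hγι, hια, hg⟩ =>
    (hc β (hβγ.trans_lt hγ)).1 _ ⟨ι, hβγ.trans hγι, hια, hg⟩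

section ChainSup

variable {α : Ordinal.{0}} {c : Ordinal.{0} → CTG S.bot} {π π' : List ℕ} {s : S.Sym}

theorem MonotoneBelow.aliases (hmono : MonotoneBelow α c) {β γ : Ordinal.{0}} (hβγ : β ≤ γ)
    (hγ : γ < α) (ha : (c β).tg.Aliases π π') : (c γ).tg.Aliases π π' :=
  let ⟨_, hψ⟩ := hmono β γ hβγ hγ
  hψ.1.aliases ha

theorem MonotoneBelow.label (hmono : MonotoneBelow α c) {β γ : Ordinal.{0}} (hβγ : β ≤ γ)
    (hγ : γ < α) {n : (c β).nodes} (hn : (c β).tg.IsPos π n) (hl : (c β).tg.lab n = some s) :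
    ∃ m, (c γ).tg.IsPos π m ∧ (c γ).tg.lab m = some s := by
  obtain ⟨ψ, hψ⟩ := hmono β γ hβγ hγ
  refine ⟨ψ n, hψ.1.isPos hn, ?_⟩
  rw [hψ.1.lab_eq_of_ne_none (by rw [hl]; exact Option.some_ne_none s), hl]

theorem ChainAliases.symm (h : ChainAliases α c π π') : ChainAliases α c π' π :=
  let ⟨β, hβ, n, hn, hn'⟩ := h
  ⟨β, hβ, n, hn', hn⟩

theorem ChainAliases.trans (hmono : MonotoneBelow α c) {π'' : List ℕ}
    (h : ChainAliases α c π π') (h' : ChainAliases α c π' π'') : ChainAliases α c π π'' := by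
  obtain ⟨β, hβ, ha⟩ := h
  obtain ⟨β', hβ', ha'⟩ := h'
  obtain ⟨n, hn, hn'⟩ := hmono.aliases (le_max_left β β') (max_lt hβ hβ') ha
  obtain ⟨m, hm, hm'⟩ := hmono.aliases (le_max_right β β') (max_lt hβ hβ') ha'
  exact ⟨_, max_lt hβ hβ', n, hn, hn'.unique hm ▸ hm'⟩

theorem ChainAliases.chainPos (h : ChainAliases α c π π') : ChainPos α c π' :=
  let ⟨β, hβ, n, _, hn'⟩ := h
  ⟨β, hβ, n, hn'⟩

theorem ChainPos.chainAliases_self (h : ChainPos α c π) : ChainAliases α c π π :=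
  let ⟨β, hβ, n, hn⟩ := h
  ⟨β, hβ, n, hn, hn⟩

theorem ChainLabel.chainPos (h : ChainLabel α c π s) : ChainPos α c π :=
  let ⟨β, hβ, n, hn, _⟩ := h
  ⟨β, hβ, n, hn⟩

theorem chainClass_eq (hmono : MonotoneBelow α c) (h : ChainAliases α c π π') :
    chainClass α c π = chainClass α c π' :=
  Set.ext fun _ => ⟨h.symm.trans hmono, h.trans hmono⟩

theorem eq_chainClass_of_mem (hmono : MonotoneBelow α c) {C : Set (List ℕ)}
    (hC : C ∈ chainNodes α c) (hπ : π ∈ C) : C = chainClass α c π := by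
  obtain ⟨π₀, -, rfl⟩ := hC
  exact chainClass_eq hmono hπ

theorem ChainLabel.of_chainAliases (hmono : MonotoneBelow α c) (hg : ChainLabel α c π s)
    (h : ChainAliases α c π π') : ChainLabel α c π' s := by
  obtain ⟨β, hβ, n, hn, hl⟩ := hg
  obtain ⟨β', hβ', ha⟩ := h
  obtain ⟨m, hm, hml⟩ := hmono.label (le_max_left β β') (max_lt hβ hβ') hn hl
  obtain ⟨y, hy, hy'⟩ := hmono.aliases (le_max_right β β') (max_lt hβ hβ') ha
  exact ⟨_, max_lt hβ hβ', y, hy', hm.unique hy ▸ hml⟩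

theorem ChainLabel.unique (hmono : MonotoneBelow α c) {s' : S.Sym} (hg : ChainLabel α c π s)
    (hg' : ChainLabel α c π s') : s = s' := by
  obtain ⟨β, hβ, n, hn, hl⟩ := hg
  obtain ⟨β', hβ', n', hn', hl'⟩ := hg'
  obtain ⟨m, hm, hml⟩ := hmono.label (le_max_left β β') (max_lt hβ hβ') hn hl
  obtain ⟨m', hm', hml'⟩ := hmono.label (le_max_right β β') (max_lt hβ hβ') hn' hl'
  rw [hm.unique hm', hml'] at hml
  exact (Option.some_inj.1 hml).symm

theorem chainLab_chainClass_eq_some_iff (hmono : MonotoneBelow α c) :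
    chainLab α c (chainClass α c π) = some s ↔ ChainLabel α c π s := by
  unfold chainLab
  split_ifs with h
  · obtain ⟨π', hπ', hg'⟩ := h.choose_spec
    have hg := hg'.of_chainAliases hmono hπ'.symm
    exact ⟨fun e => Option.some_inj.1 e ▸ hg, fun hs => congrArg some (hg.unique hmono hs)⟩
  · exact ⟨nofun, fun hs => absurd ⟨s, π, hs.chainPos.chainAliases_self, hs⟩ h⟩

theorem chainPos_nil (hα : α ≠ 0) : ChainPos α c [] :=
  ⟨0, pos_iff_ne_zero.2 hα, _, .root⟩

theorem ChainPos.exists_chainLabel {i : ℕ} (h : ChainPos α c (π ++ [i])) :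
    ∃ s, ChainLabel α c π s ∧ i < S.ar s := by
  obtain ⟨β, hβ, n, hn⟩ := h
  obtain ⟨m, hm⟩ := hn.of_prefix (List.prefix_append π [i])
  obtain ⟨s, hs⟩ := Option.ne_none_iff_exists'.1 (TermGraph.lab_ne_none_of_isPos_append hn hm)
  have hi := hn.lt_ar hm
  rw [hs] at hi
  exact ⟨s, ⟨β, hβ, m, hm, hs⟩, hi⟩

theorem ChainLabel.chainPos_append {i : ℕ} (hg : ChainLabel α c π s) (hi : i < S.ar s) :
    ChainPos α c (π ++ [i]) := by
  obtain ⟨β, hβ, n, hn, hl⟩ := hg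
  have hi' : i < S.bot.ar ((c β).tg.lab n) := by rwa [hl]
  exact ⟨β, hβ, _, hn.step ⟨i, hi'⟩⟩

theorem ChainAliases.append (hmono : MonotoneBelow α c) {i : ℕ} (h : ChainAliases α c π π')
    (hg : ChainLabel α c π s) (hi : i < S.ar s) :
    ChainAliases α c (π ++ [i]) (π' ++ [i]) := by
  obtain ⟨β, hβ, ha⟩ := h
  obtain ⟨β', hβ', n, hn, hl⟩ := hg
  obtain ⟨y, hy, hy'⟩ := hmono.aliases (le_max_left β β') (max_lt hβ hβ') ha
  obtain ⟨m, hm, hml⟩ := hmono.label (le_max_right β β') (max_lt hβ hβ') hn hl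
  cases hy.unique hm
  have hi' : i < S.bot.ar ((c (max β β')).tg.lab y) := by rwa [hml]
  exact ⟨_, max_lt hβ hβ', _, hy.step ⟨i, hi'⟩, hy'.step ⟨i, hi'⟩⟩

theorem chainSuc_chainClass (hmono : MonotoneBelow α c) {i : ℕ} (hg : ChainLabel α c π s)
    (hi : i < S.ar s) : chainSuc α c (chainClass α c π) i = chainClass α c (π ++ [i]) :=
  Set.ext fun _ => ⟨fun ⟨_, hπ', ha⟩ => (hπ'.append hmono hg hi).trans hmono ha,
    fun ha => ⟨π, hg.chainPos.chainAliases_self, ha⟩⟩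

theorem chainSuc_mem (hmono : MonotoneBelow α c) {C : Set (List ℕ)} (hC : C ∈ chainNodes α c)
    {i : ℕ} (hi : i < S.bot.ar (chainLab α c C)) : chainSuc α c C i ∈ chainNodes α c := by
  obtain ⟨π, -, rfl⟩ := hC
  cases hs : chainLab α c (chainClass α c π) with
  | none => simp only [hs] at hi; exact absurd hi (Nat.not_lt_zero i)
  | some s =>
    simp only [hs] at hi
    have hg := (chainLab_chainClass_eq_some_iff hmono).1 hs
    exact ⟨π ++ [i], hg.chainPos_append hi, chainSuc_chainClass hmono hg hi⟩

/-- The supremum of a `≤⊥r`-chain: the quotient of its positions by eventual aliasing. -/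
noncomputable def chainSupGraph (hα : α ≠ 0) (hmono : MonotoneBelow α c) :
    TermGraph S.bot (chainNodes α c) where
  lab C := chainLab α c C
  suc C i := ⟨chainSuc α c C i, chainSuc_mem hmono C.2 i.isLt⟩
  root := ⟨chainClass α c [], [], chainPos_nil hα, rfl⟩

theorem isPos_chainSupGraph (hα : α ≠ 0) (hmono : MonotoneBelow α c) (hπ : ChainPos α c π) :
    (chainSupGraph hα hmono).IsPos π ⟨chainClass α c π, π, hπ, rfl⟩ := by
  induction π using List.reverseRecOn with
  | nil => exact .root
  | append_singleton π i ih =>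
    obtain ⟨s, hg, hi⟩ := hπ.exists_chainLabel
    have hi' : i < S.bot.ar ((chainSupGraph hα hmono).lab ⟨_, π, hg.chainPos, rfl⟩) := by
      change i < S.bot.ar (chainLab α c (chainClass α c π))
      rwa [(chainLab_chainClass_eq_some_iff hmono).2 hg]
    convert (ih hg.chainPos).step ⟨i, hi'⟩ using 1
    exact Subtype.ext (chainSuc_chainClass hmono hg hi).symm

theorem isPos_chainSupGraph_iff (hα : α ≠ 0) (hmono : MonotoneBelow α c) {C : chainNodes α c} :
    (chainSupGraph hα hmono).IsPos π C ↔ π ∈ C.1 := by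
  refine ⟨fun h => ?_, fun h => ?_⟩
  · induction h with
    | root => exact (chainPos_nil hα).chainAliases_self
    | @step π C _ i ih =>
      refine ⟨π, ih, ?_⟩
      have hi : (i : ℕ) < S.bot.ar (chainLab α c C.1) := i.isLt
      rw [eq_chainClass_of_mem hmono C.2 ih] at hi
      cases hs : chainLab α c (chainClass α c π) with
      | none => simp only [hs] at hi; exact absurd hi (Nat.not_lt_zero i)
      | some s =>
        simp only [hs] at hi
        exact (((chainLab_chainClass_eq_some_iff hmono).1 hs).chainPos_append hi).chainAliases_self
  · obtain ⟨π₀, -, hC⟩ := C.2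
    have hπ : ChainAliases α c π₀ π := by rw [hC] at h; exact h
    convert isPos_chainSupGraph hα hmono hπ.chainPos
    exact Subtype.ext (hC.trans (chainClass_eq hmono hπ))

theorem aliases_chainSupGraph_iff (hα : α ≠ 0) (hmono : MonotoneBelow α c) :
    (chainSupGraph hα hmono).Aliases π π' ↔ ChainAliases α c π π' := by
  simp only [TermGraph.Aliases, isPos_chainSupGraph_iff]
  refine ⟨fun ⟨C, hπ, hπ'⟩ => ?_, fun h => ⟨⟨_, π, h.symm.chainPos, rfl⟩,
    h.symm.chainPos.chainAliases_self, h⟩⟩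
  rw [eq_chainClass_of_mem hmono C.2 hπ] at hπ'
  exact hπ'

noncomputable def chainSup (hα : α ≠ 0) (hmono : MonotoneBelow α c) : CTG S.bot where
  nodes := chainNodes α c
  tg := chainSupGraph hα hmono
  reach C := by
    obtain ⟨π, hπ, hC⟩ := C.2
    exact ⟨π, (isPos_chainSupGraph_iff hα hmono).2 (hC ▸ hπ.chainAliases_self)⟩
  canon C := Set.ext fun _ => (isPos_chainSupGraph_iff hα hmono).symm

/-- Acyclicity transfers in both directions because aliasing in the supremum is aliasing at
some stage, and rigidity fixes the acyclic positions of `n` along the chain. -/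
theorem nodePosAcy_eq_of_isPos_chainSupGraph (hα : α ≠ 0) (hmono : MonotoneBelow α c)
    {β : Ordinal.{0}} (hβ : β < α) {n : (c β).nodes} (hn : (c β).tg.lab n ≠ none)
    {C : chainNodes α c} (hC : ∀ π, (c β).tg.IsPos π n → (chainSupGraph hα hmono).IsPos π C) :
    (c β).tg.nodePosAcy n = (chainSupGraph hα hmono).nodePosAcy C := by
  ext π
  constructor
  · rintro ⟨hπ, hacy⟩
    refine ⟨hC π hπ, fun π₁ π₂ Z h12 h2 hZ₁ hZ₂ => ?_⟩
    obtain ⟨β', hβ', ha⟩ := (aliases_chainSupGraph_iff hα hmono).1 ⟨Z, hZ₁, hZ₂⟩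
    obtain ⟨ψ, hψ⟩ := hmono β _ (le_max_left β β') (max_lt hβ hβ')
    have hπγ : π ∈ (c (max β β')).tg.nodePosAcy (ψ n) := hψ.nodePosAcy_eq hn ▸ ⟨hπ, hacy⟩
    obtain ⟨y, hy₁, hy₂⟩ := hmono.aliases (le_max_right β β') (max_lt hβ hβ') ha
    exact hπγ.2 π₁ π₂ y h12 h2 hy₁ hy₂
  · rintro ⟨hπ, hacy⟩
    obtain ⟨π₀, hπ₀⟩ := (c β).reach n
    obtain ⟨β', hβ', ha⟩ := (aliases_chainSupGraph_iff hα hmono).1 ⟨C, hC π₀ hπ₀, hπ⟩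
    obtain ⟨ψ, hψ⟩ := hmono β _ (le_max_left β β') (max_lt hβ hβ')
    obtain ⟨y, hy₀, hy⟩ := hmono.aliases (le_max_right β β') (max_lt hβ hβ') ha
    cases hy₀.unique (hψ.1.isPos hπ₀)
    rw [hψ.nodePosAcy_eq hn]
    refine ⟨hy, fun π₁ π₂ m h12 h2 hm₁ hm₂ => ?_⟩
    obtain ⟨Z, hZ₁, hZ₂⟩ :=
      (aliases_chainSupGraph_iff hα hmono).2 ⟨_, max_lt hβ hβ', m, hm₁, hm₂⟩
    exact hacy π₁ π₂ Z h12 h2 hZ₁ hZ₂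

theorem le_chainSup (hα : α ≠ 0) (hmono : MonotoneBelow α c) {β : Ordinal.{0}} (hβ : β < α) :
    (c β).LeR (chainSup hα hmono) := by
  choose pos hpos using (c β).reach
  let φ (n : (c β).nodes) : chainNodes α c := ⟨chainClass α c (pos n), _, ⟨β, hβ, n, hpos n⟩, rfl⟩
  have hφ (π : List ℕ) (n : (c β).nodes) (hπ : (c β).tg.IsPos π n) :
      (chainSupGraph hα hmono).IsPos π (φ n) :=
    (isPos_chainSupGraph_iff hα hmono).2 ⟨β, hβ, n, hpos n, hπ⟩
  refine ⟨φ, TermGraph.isDHom_of_isPos (c β).reach hφ fun n hn => ?_,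
    fun n hn => nodePosAcy_eq_of_isPos_chainSupGraph hα hmono hβ hn (hφ · n)⟩
  obtain ⟨s, hs⟩ := Option.ne_none_iff_exists'.1 hn
  rw [hs]
  exact (chainLab_chainClass_eq_some_iff hmono).2 ⟨β, hβ, n, hpos n, hs⟩

/-- Otherwise `π` would be a `⊥`-node of the supremum, hence of `L`, which lies below it. -/
theorem exists_chainLabel_of_total (hα : α ≠ 0) (hmono : MonotoneBelow α c) {L : CTG S.bot}
    (hT : L.Total) (hub : ∀ β < α, (c β).LeR L) (hle : L.LeR (chainSup hα hmono))
    {π : List ℕ} (hπ : ChainPos α c π) : ∃ s, ChainLabel α c π s := by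
  obtain ⟨β, hβ, n, hn⟩ := hπ
  obtain ⟨χ, hχ⟩ := hub β hβ
  obtain ⟨ψ, hψ⟩ := hle
  have hW : (chainSupGraph hα hmono).IsPos π (ψ (χ n)) := hψ.1.isPos (hχ.1.isPos hn)
  obtain ⟨s, hs⟩ := Option.ne_none_iff_exists'.1 (hT (χ n))
  have hlab : chainLab α c (ψ (χ n)).1 = some s := (hψ.1.lab_eq_of_ne_none (hT (χ n))).trans hs
  rw [eq_chainClass_of_mem hmono (ψ (χ n)).2 ((isPos_chainSupGraph_iff hα hmono).1 hW)] at hlab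
  exact ⟨s, (chainLab_chainClass_eq_some_iff hmono).1 hlab⟩

theorem exists_le_botDepth (hα : α ≠ 0) (hmono : MonotoneBelow α c) {L : CTG S.bot}
    (hL : IsLubR {g | ∃ β < α, g = c β} L) (hT : L.Total) (k : ℕ) :
    ∃ β < α, k ≤ (c β).tg.botDepth := by
  have hub (β) (hβ : β < α) : (c β).LeR L := hL.1 _ ⟨β, hβ, rfl⟩
  have hle : L.LeR (chainSup hα hmono) := hL.2 _ fun _ ⟨β, hβ, hg⟩ => hg ▸ le_chainSup hα hmono hβ
  have hQ : {π | ChainPos α c π ∧ π.length ≤ k}.Finite :=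
    ((chainSupGraph hα hmono).finite_pos_length_le k).subset fun π ⟨hπ, hlen⟩ =>
      ⟨⟨⟨_, π, hπ, rfl⟩, isPos_chainSupGraph hα hmono hπ⟩, hlen⟩
  obtain ⟨β₀, hβ₀, hstage⟩ := exists_stage_of_finite hα hQ
    (P := fun π β => ∃ n, (c β).tg.IsPos π n ∧ (c β).tg.lab n ≠ none) fun π ⟨hπ, _⟩ => by
      obtain ⟨s, β, hβ, n, hn, hs⟩ := exists_chainLabel_of_total hα hmono hT hub hle hπ
      exact ⟨β, hβ, n, hn, by rw [hs]; exact Option.some_ne_none s⟩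
  refine ⟨β₀, hβ₀, TermGraph.le_botDepth_iff.2 fun w hw => not_lt.1 fun hlt => ?_⟩
  obtain ⟨π, hπ, -, hlen⟩ := TermGraph.exists_isAcyclicPos_length_eq_depth ((c β₀).reach w)
  obtain ⟨β, hββ₀, n, hn, hnl⟩ := hstage π ⟨⟨β₀, hβ₀, w, hπ⟩, by omega⟩
  obtain ⟨ψ, hψ⟩ := hmono β β₀ hββ₀ hβ₀
  have hlab := hψ.1.lab_eq_of_ne_none hnl
  rw [← hπ.unique (hψ.1.isPos hn), hw] at hlab
  exact hnl hlab.symm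

end ChainSup

end CTG

theorem total_liminf_is_limit_general (S : Signature) (α : Ordinal.{0}) (hα : α ≠ 0)
    (f : Ordinal.{0} → CTG S.bot)
    (L : CTG S.bot) (hL : CTG.IsLiminfR α f L) (hT : L.Total) :
    CTG.OrdTendsto α f L := by
  obtain ⟨c, hc, hlub⟩ := hL
  have hmono := CTG.monotoneBelow_of_isGlbR hc
  intro ε hε
  obtain ⟨k, hk⟩ := exists_pow_lt_of_lt_one hε (by norm_num : (1 / 2 : ℝ) < 1)
  obtain ⟨β, hβ, hbot⟩ := CTG.exists_le_botDepth hα hmono hlub hT (k + 1)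
  refine ⟨β, hβ, fun ι hβι hια => ?_⟩
  obtain ⟨φ, hφ⟩ := (hc β hβ).1 (f ι) ⟨ι, hβι.le, hια, rfl⟩
  obtain ⟨χ, hχ⟩ := hlub.1 (c β) ⟨β, hβ, rfl⟩
  have hfL : TermGraph.Iso ((f ι).tg.trunc (k + 1)) (L.tg.trunc (k + 1)) :=
    (hφ.trunc_iso (c β).reach (f ι).reach k.succ_ne_zero hbot).symm.trans
      (hχ.trunc_iso (c β).reach L.reach k.succ_ne_zero hbot)
  calc CTG.rdist (f ι) L ≤ (1 / 2) ^ (k + 1) := CTG.rdist_le_of_iso_trunc hfL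
    _ ≤ (1 / 2) ^ k := pow_le_pow_of_le_one (by norm_num) (by norm_num) k.le_succ
    _ < ε := hk

/-- If the limit inferior (in the rigid partial order `≤⊥r`) of
a non-empty ordinal-indexed sequence of total canonical term graphs is itself
total, then the sequence converges w.r.t. the rigid distance `d†` and the limit
inferior is its limit. -/
theorem total_liminf_is_limit (S : Signature) (α : Ordinal.{0}) (hα : α ≠ 0)
    (f : Ordinal.{0} → CTG S.bot) (hf : ∀ ι < α, (f ι).Total)
    (L : CTG S.bot) (hL : CTG.IsLiminfR α f L) (hT : L.Total) :
    CTG.OrdTendsto α f L :=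
  total_liminf_is_limit_general S α hα f L hL hT

end TGR
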